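/- arXiv:2405.04619 — 2 statements merged into one kernel-verified Lean document; each statement's English description precedes it below -/
import Mathlib

section
/- Let G be a group, ω : G × G × G → ℂˣ a 3-cocycle with trivial action (i.e., ω(h,k,l)·ω(g, h*k, l)·ω(g,h,k) = ω(g*h, k, l)·ω(g, h, k*l) for all g,h,k,l ∈ G). Fix k ∈ G and define, for g, h in the centralizer C_G(k), β_k(g,h) := ω(g,h,k) · ω(k,g,h) · ω(g,k,h)⁻¹. Then β_k is a 2-cocycle on C_G(k): β_k(g,h) · β_k(g*h, l) = β_k(h,l) · β_k(g, h*l) for all g, h, l ∈ C_G(k). -/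
/-- The transgression `β_k(g,h) = ω(g,h,k)·ω(k,g,h)·ω(g,k,h)⁻¹` of a 3-cocycle ω is a
2-cocycle on the centralizer of k. -/
theorem transgression_is_two_cocycle {G : Type*} [Group G] (ω : G → G → G → ℂˣ)
    (hω : ∀ g h k l : G, ω h k l * ω g (h * k) l * ω g h k = ω (g * h) k l * ω g h (k * l))
    (k : G) :
    ∀ g h l : G, g * k = k * g → h * k = k * h → l * k = k * l →
      (fun a b => ω a b k * ω k a b * (ω a k b)⁻¹) g h *
        (fun a b => ω a b k * ω k a b * (ω a k b)⁻¹) (g * h) l =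
      (fun a b => ω a b k * ω k a b * (ω a k b)⁻¹) h l *
        (fun a b => ω a b k * ω k a b * (ω a k b)⁻¹) g (h * l) := by
  intro g h l hg hh hl
  simp only []
  -- four instances of the 3-cocycle identity
  have e1 := hω g h l k
  have e2 := hω g h k l
  have e3 := hω g k h l
  have e4 := hω k g h l
  -- use the centralizer hypotheses to identify arguments
  rw [hh, ← hl] at e2
  rw [← hg] at e4
  -- cast everything to ℂ
  have c1 := congrArg (Units.val) e1
  have c2 := congrArg (Units.val) e2
  have c3 := congrArg (Units.val) e3
  have c4 := congrArg (Units.val) e4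
  simp only [Units.val_mul] at c1 c2 c3 c4
  rw [Units.ext_iff]
  simp only [Units.val_mul, Units.val_inv_eq_inv_val]
  -- solve each instance for one compound value
  have n1 : ((ω g h (l*k) : ℂˣ) : ℂ) ≠ 0 := Units.ne_zero _
  have n3 : ((ω (g*k) h l : ℂˣ) : ℂ) ≠ 0 := Units.ne_zero _
  have h1' : ((ω (g*h) l k : ℂˣ) : ℂ) =
      (ω h l k : ℂ) * (ω g (h*l) k : ℂ) * (ω g h l : ℂ) / (ω g h (l*k) : ℂ) := by
    rw [eq_div_iff n1]; linear_combination -c1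
  have h2' : ((ω (g*h) k l : ℂˣ) : ℂ) =
      (ω h k l : ℂ) * (ω g (k*h) l : ℂ) * (ω g h k : ℂ) / (ω g h (l*k) : ℂ) := by
    rw [eq_div_iff n1]; linear_combination -c2
  have h3' : ((ω g k (h*l) : ℂˣ) : ℂ) =
      (ω k h l : ℂ) * (ω g (k*h) l : ℂ) * (ω g k h : ℂ) / (ω (g*k) h l : ℂ) := by
    rw [eq_div_iff n3]; linear_combination -c3
  have h4' : ((ω k g (h*l) : ℂˣ) : ℂ) =
      (ω g h l : ℂ) * (ω k (g*h) l : ℂ) * (ω k g h : ℂ) / (ω (g*k) h l : ℂ) := by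
    rw [eq_div_iff n3]; linear_combination -c4
  rw [h1', h2', h3', h4']
  have nz : ∀ a b c : G, ((ω a b c : ℂˣ) : ℂ) ≠ 0 := fun a b c => Units.ne_zero _
  field_simp
end

section
/- Let G be a finite group acting on the set P = {(g,h) ∈ G × G : g*h = h*g} of commuting pairs by simultaneous conjugation, x · (g,h) = (x g x⁻¹, x h x⁻¹). Then the number of orbits of this action equals the sum, over a set of representatives g of the conjugacy classes of G, of the number of conjugacy classes of the centralizer C_G(g). -/
/-! Fibre the commuting pairs `(g, h)` over the conjugacy class of `g`. Conjugating by a suitable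
element moves `g` to the chosen representative `r`, and two pairs `(r, h)`, `(r, h')` are then
simultaneously conjugate exactly when a conjugator fixing `r`, i.e. an element of `C_G(r)`, sends
`h` to `h'`. Hence the orbits over the class of `r` are the conjugacy classes of `C_G(r)`. -/

namespace CommutingPair

variable {G : Type*} [Group G]

def SimulConj (x y : {p : G × G // Commute p.1 p.2}) : Prop :=
  ∃ g : G, g * x.val.1 * g⁻¹ = y.val.1 ∧ g * x.val.2 * g⁻¹ = y.val.2

theorem simulConj_equivalence : Equivalence (SimulConj (G := G)) where
  refl _ := ⟨1, by simp, by simp⟩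
  symm := by
    rintro x y ⟨g, h₁, h₂⟩
    exact ⟨g⁻¹, by rw [← h₁]; group, by rw [← h₂]; group⟩
  trans := by
    rintro x y z ⟨g, h₁, h₂⟩ ⟨k, k₁, k₂⟩
    exact ⟨k * g, by rw [← k₁, ← h₁]; group, by rw [← k₂, ← h₂]; group⟩

theorem quot_mk_eq_iff {x y : {p : G × G // Commute p.1 p.2}} :
    Quot.mk SimulConj x = Quot.mk SimulConj y ↔ SimulConj x y :=
  Quot.eq.trans simulConj_equivalence.eqvGen_iff

def ofCentralizer (r : G) (h : Subgroup.centralizer {r}) : {p : G × G // Commute p.1 p.2} :=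
  ⟨(r, h), (Subgroup.mem_centralizer_singleton_iff.mp h.2).symm⟩

theorem simulConj_ofCentralizer_iff {r : G} {h h' : Subgroup.centralizer {r}} :
    SimulConj (ofCentralizer r h) (ofCentralizer r h') ↔ IsConj h h' := by
  rw [isConj_iff]
  constructor
  · rintro ⟨g, hg₁, hg₂⟩
    have hg : g ∈ Subgroup.centralizer {r} :=
      Subgroup.mem_centralizer_singleton_iff.mpr (mul_inv_eq_iff_eq_mul.mp hg₁)
    exact ⟨⟨g, hg⟩, Subtype.ext hg₂⟩
  · rintro ⟨⟨g, hg⟩, rfl⟩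
    refine ⟨g, ?_, rfl⟩
    rw [mul_inv_eq_iff_eq_mul]
    exact Subgroup.mem_centralizer_singleton_iff.mp hg

theorem exists_simulConj_ofCentralizer {r : G} (x : {p : G × G // Commute p.1 p.2})
    (hr : IsConj r x.val.1) : ∃ h, SimulConj (ofCentralizer r h) x := by
  obtain ⟨z, hz⟩ := isConj_iff.mp hr
  obtain rfl : r = z⁻¹ * x.val.1 * z := by rw [← hz]; group
  have hmem : z⁻¹ * x.val.2 * z ∈ Subgroup.centralizer {z⁻¹ * x.val.1 * z} := by
    rw [Subgroup.mem_centralizer_singleton_iff]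
    simp only [mul_assoc, mul_inv_cancel_left]
    rw [← mul_assoc x.val.2, x.prop.symm.eq, mul_assoc]
  exact ⟨⟨_, hmem⟩, z, hz, by simp [ofCentralizer, mul_assoc]⟩

variable (rep : ConjClasses G → G)

def ofSigma (p : Σ c : ConjClasses G, ConjClasses (Subgroup.centralizer {rep c})) :
    Quot (SimulConj (G := G)) :=
  Quotient.liftOn p.2 (fun h => Quot.mk _ (ofCentralizer (rep p.1) h))
    fun _ _ hconj => Quot.sound (simulConj_ofCentralizer_iff.mpr hconj)

variable {rep} (hrep : ∀ c : ConjClasses G, ConjClasses.mk (rep c) = c)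
include hrep

theorem ofSigma_injective : Function.Injective (ofSigma rep) := by
  rintro ⟨c, d⟩ ⟨c', d'⟩ heq
  obtain ⟨h, rfl⟩ := ConjClasses.mk_surjective d
  obtain ⟨h', rfl⟩ := ConjClasses.mk_surjective d'
  have hsim := quot_mk_eq_iff.mp heq
  obtain rfl : c = c' := by
    obtain ⟨g, hg, -⟩ := hsim
    rw [← hrep c, ← hrep c', ConjClasses.mk_eq_mk_iff_isConj]
    exact isConj_iff.mpr ⟨g, hg⟩
  exact Sigma.ext rfl (heq_of_eq
    (ConjClasses.mk_eq_mk_iff_isConj.mpr (simulConj_ofCentralizer_iff.mp hsim)))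

theorem ofSigma_surjective : Function.Surjective (ofSigma rep) := by
  rintro ⟨x⟩
  have hr : IsConj (rep (ConjClasses.mk x.val.1)) x.val.1 := by
    rw [← ConjClasses.mk_eq_mk_iff_isConj, hrep]
  obtain ⟨h, hsim⟩ := exists_simulConj_ofCentralizer x hr
  exact ⟨⟨_, ConjClasses.mk h⟩, Quot.sound hsim⟩

end CommutingPair

open CommutingPair in
/-- The number of orbits of simultaneous conjugation of a finite group G on its set of
commuting pairs equals the sum, over representatives of the conjugacy classes of G, of the
number of conjugacy classes of the corresponding centralizers. -/
theorem card_orbits_commuting_pairs {G : Type*} [Group G] [Fintype G]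
    (rep : ConjClasses G → G) (hrep : ∀ c : ConjClasses G, ConjClasses.mk (rep c) = c) :
    Nat.card (Quot (fun x y : {p : G × G // p.1 * p.2 = p.2 * p.1} =>
        ∃ g : G, g * x.val.1 * g⁻¹ = y.val.1 ∧ g * x.val.2 * g⁻¹ = y.val.2))
      = ∑ᶠ c : ConjClasses G,
          Nat.card (ConjClasses (Subgroup.centralizer {rep c})) := by
  have := Fintype.ofFinite (ConjClasses G)
  rw [finsum_eq_sum_of_fintype, ← Nat.card_sigma]
  -- `Commute a b` unfolds to `a * b = b * a`, so the quotient on the left is `Quot SimulConj`.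
  exact (Nat.card_congr (Equiv.ofBijective _
    ⟨ofSigma_injective hrep, ofSigma_surjective hrep⟩)).symm
end
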